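/- arXiv:1911.02862 — 2 statements merged into one kernel-verified Lean document; each statement's English description precedes it below -/
import Mathlib

section
/- If A is a maximally monotone operator on a Hilbert space, then the resolvent (Id + A)^{-1} is single-valued, has full domain, and is firmly nonexpansive, i.e. ‖J(x)−J(y)‖² ≤ ⟨x−y, J(x)−J(y)⟩ for J = (Id+A)^{-1}. -/
open scoped RealInnerProductSpace

section MintyAux
variable {H : Type*} [NormedAddCommGroup H] [InnerProductSpace ℝ H] [CompleteSpace H]

private lemma minty_slack_id (θ t t' : ℝ) (z w z' w' y v : H) :
    ⟪((1-θ)•z+θ•z') - y, ((1-θ)•w+θ•w') - v⟫ - ‖((1-θ)•z+θ•z') + ((1-θ)•w+θ•w')‖^2/2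
      + ((1-θ)*t + θ*t' - θ*(1-θ)/2*(‖z-z'‖^2+‖w-w'‖^2))
    = (1-θ)*(⟪z-y,w-v⟫ - ‖z+w‖^2/2 + t) + θ*(⟪z'-y,w'-v⟫ - ‖z'+w'‖^2/2 + t') := by
  simp only [← real_inner_self_eq_norm_sq]
  simp only [inner_sub_left, inner_sub_right, inner_add_left, inner_add_right,
    real_inner_smul_left, real_inner_smul_right, real_inner_comm]
  ring

private lemma minty_theta_step (θ μ q D : ℝ) (hθ0 : 0 < θ)
    (hmu : μ ≤ (1-θ)*μ + θ*q - θ*(1-θ)/2*D) : (1-θ)/2*D ≤ q - μ := by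
  have h2 : θ * ((1-θ)/2*D) ≤ θ * (q - μ) := by nlinarith [hmu]
  exact le_of_mul_le_mul_left h2 hθ0

private lemma minty_half_to_full (D B : ℝ)
    (half : ∀ θ : ℝ, 0 < θ → θ < 1 → (1-θ)/2*D ≤ B) : D ≤ 2*B := by
  by_contra hc
  push_neg at hc
  have h4 := half (1/2) (by norm_num) (by norm_num)
  have hDpos : 0 < D := by linarith
  have hBpos : 0 < B := by linarith
  have hθ₀pos : 0 < (D - 2*B)/(2*D) := div_pos (by linarith) (by linarith)
  have hθ₀lt : (D - 2*B)/(2*D) < 1 := by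
    rw [div_lt_one (by linarith)]
    linarith
  have h5 := half _ hθ₀pos hθ₀lt
  have he : (1-(D - 2*B)/(2*D))/2*D = (D + 2*B)/4 := by
    field_simp
    ring
  rw [he] at h5
  linarith

private lemma minty_zero (A : H → Set H)
    (hmono : ∀ x y u v, u ∈ A x → v ∈ A y → 0 ≤ ⟪x - y, u - v⟫)
    (hmax : ∀ x u, (∀ y v, v ∈ A y → 0 ≤ ⟪x - y, u - v⟫) → u ∈ A x) :
    ∃ z, -z ∈ A z := by
  classical
  set P : H → H → ℝ → Prop :=
    fun z w t => ∀ y v, v ∈ A y → ‖z + w‖^2/2 - t ≤ ⟪z - y, w - v⟫ with hPdef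
  -- graph points are admissible
  have hPmem : ∀ y v, v ∈ A y → P y v (‖y + v‖^2/2) := by
    intro y v hv y' v' hv'
    have := hmono y y' v v' hv hv'
    linarith
  -- nonempty graph
  have hne : ∃ y v, v ∈ A y := by
    by_contra hc
    push_neg at hc
    exact hc 0 0 (hmax 0 0 (fun y v hv => absurd hv (hc y v)))
  obtain ⟨y₀, v₀, hv₀⟩ := hne
  -- lower bound
  have hlow : ∀ z w t, P z w t → ‖z + w‖^2/2 ≤ t := by
    intro z w t h
    by_contra hc
    push_neg at hc
    have hwz : w ∈ A z := by
      refine hmax z w (fun y v hv => ?_)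
      have := h y v hv
      linarith
    have h2 := h z w hwz
    simp only [sub_self, inner_zero_left] at h2
    linarith
  set T : Set ℝ := {t | ∃ z w, P z w t} with hTdef
  have hTne : T.Nonempty := ⟨_, y₀, v₀, hPmem y₀ v₀ hv₀⟩
  have hTbdd : BddBelow T := by
    refine ⟨0, fun t ht => ?_⟩
    obtain ⟨z, w, h⟩ := ht
    have h1 := hlow z w t h
    have h2 : (0:ℝ) ≤ ‖z+w‖^2/2 := by positivity
    linarith
  set μ : ℝ := sInf T with hμdef
  have hμ0 : 0 ≤ μ := by
    refine le_csInf hTne (fun t ht => ?_)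
    obtain ⟨z, w, h⟩ := ht
    have h1 := hlow z w t h
    have h2 : (0:ℝ) ≤ ‖z+w‖^2/2 := by positivity
    linarith
  -- convex combination
  have hcombo : ∀ θ : ℝ, 0 ≤ θ → θ ≤ 1 → ∀ z w t z' w' t', P z w t → P z' w' t' →
      P ((1-θ)•z+θ•z') ((1-θ)•w+θ•w')
        ((1-θ)*t + θ*t' - θ*(1-θ)/2*(‖z-z'‖^2+‖w-w'‖^2)) := by
    intro θ hθ0 hθ1 z w t z' w' t' h h' y v hv
    have e := minty_slack_id θ t t' z w z' w' y v
    have s1 : 0 ≤ (1-θ)*(⟪z-y,w-v⟫ - ‖z+w‖^2/2 + t) := by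
      have := h y v hv
      have : (0:ℝ) ≤ ⟪z-y,w-v⟫ - ‖z+w‖^2/2 + t := by linarith
      exact mul_nonneg (by linarith) this
    have s2 : 0 ≤ θ*(⟪z'-y,w'-v⟫ - ‖z'+w'‖^2/2 + t') := by
      have := h' y v hv
      have : (0:ℝ) ≤ ⟪z'-y,w'-v⟫ - ‖z'+w'‖^2/2 + t' := by linarith
      exact mul_nonneg hθ0 this
    linarith
  -- minimizing sequence
  have hex : ∀ n : ℕ, ∃ z w, P z w (μ + 1/(n+1)) := by
    intro n
    have hlt : μ < μ + 1/(n+1) := by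
      have : (0:ℝ) < 1/((n:ℝ)+1) := by positivity
      linarith
    obtain ⟨t, ht, htlt⟩ := exists_lt_of_csInf_lt hTne hlt
    obtain ⟨z, w, h⟩ := ht
    exact ⟨z, w, fun y v hv => le_trans (by have := h y v hv; linarith) (h y v hv)⟩
  choose zs ws hzs using hex
  -- Cauchy bound
  have hcauchy_bd : ∀ n m : ℕ, ‖zs n - zs m‖^2 + ‖ws n - ws m‖^2
      ≤ 4*(1/(n+1) + 1/(m+1)) := by
    intro n m
    have hc := hcombo (1/2) (by norm_num) (by norm_num) _ _ _ _ _ _ (hzs n) (hzs m)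
    have hmu : μ ≤ (1-(1/2:ℝ))*(μ + 1/(n+1)) + (1/2)*(μ + 1/(m+1))
        - (1/2)*(1-(1/2:ℝ))/2*(‖zs n - zs m‖^2+‖ws n - ws m‖^2) :=
      csInf_le hTbdd ⟨_, _, hc⟩
    nlinarith [hmu]
  -- Cauchy sequences
  have htend : Filter.Tendsto (fun n : ℕ => Real.sqrt (8*(1/(n+1)))) Filter.atTop (nhds 0) := by
    have h8 := tendsto_one_div_add_atTop_nhds_zero_nat.const_mul (8:ℝ)
    have := h8.sqrt
    simpa using this
  have hkeybd : ∀ (s : ℕ → H), (∀ n m : ℕ, ‖s n - s m‖^2 ≤ 4*(1/(n+1) + 1/(m+1))) →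
      CauchySeq s := by
    intro s hs
    refine cauchySeq_of_le_tendsto_0 (fun n => Real.sqrt (8*(1/(n+1)))) (fun n m N hn hm => ?_) htend
    rw [dist_eq_norm]
    have hb : ‖s n - s m‖^2 ≤ 8*(1/(N+1)) := by
      have h1 : (1:ℝ)/(n+1) ≤ 1/(N+1) := by
        apply one_div_le_one_div_of_le (by positivity)
        have : (N:ℝ) ≤ n := Nat.cast_le.mpr hn
        linarith
      have h2 : (1:ℝ)/(m+1) ≤ 1/(N+1) := by
        apply one_div_le_one_div_of_le (by positivity)
        have : (N:ℝ) ≤ m := Nat.cast_le.mpr hm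
        linarith
      have := hs n m
      linarith
    calc ‖s n - s m‖ = Real.sqrt (‖s n - s m‖^2) := by
          rw [Real.sqrt_sq (norm_nonneg _)]
      _ ≤ Real.sqrt (8*(1/(N+1))) := Real.sqrt_le_sqrt hb
  have hzc : CauchySeq zs := hkeybd zs (fun n m => by have := hcauchy_bd n m; nlinarith [sq_nonneg ‖ws n - ws m‖])
  have hwc : CauchySeq ws := hkeybd ws (fun n m => by have := hcauchy_bd n m; nlinarith [sq_nonneg ‖zs n - zs m‖])
  obtain ⟨zb, hzb⟩ := cauchySeq_tendsto_of_complete hzc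
  obtain ⟨wb, hwb⟩ := cauchySeq_tendsto_of_complete hwc
  -- limit is admissible with value μ
  have hPlim : P zb wb μ := by
    intro y v hv
    have hL : Filter.Tendsto (fun n => ‖zs n + ws n‖^2/2 - (μ + 1/(n+1)))
        Filter.atTop (nhds (‖zb + wb‖^2/2 - μ)) := by
      have hn : Filter.Tendsto (fun n => ‖zs n + ws n‖) Filter.atTop (nhds ‖zb + wb‖) :=
        ((hzb.add hwb).norm)
      have h1 : Filter.Tendsto (fun n => ‖zs n + ws n‖^2/2) Filter.atTop
          (nhds (‖zb + wb‖^2/2)) := ((hn.pow 2).div_const 2)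
      have h2 : Filter.Tendsto (fun n : ℕ => μ + 1/((n:ℝ)+1)) Filter.atTop (nhds (μ + 0)) :=
        tendsto_const_nhds.add tendsto_one_div_add_atTop_nhds_zero_nat
      simpa using h1.sub h2
    have hR : Filter.Tendsto (fun n => ⟪zs n - y, ws n - v⟫) Filter.atTop
        (nhds ⟪zb - y, wb - v⟫) := by
      exact Filter.Tendsto.inner (hzb.sub tendsto_const_nhds) (hwb.sub tendsto_const_nhds)
    exact le_of_tendsto_of_tendsto' hL hR (fun n => hzs n y v hv)
  -- key inequality
  have hkey : ∀ y v, v ∈ A y →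
      ‖y - zb‖^2 + ‖v - wb‖^2 ≤ ‖y + v‖^2 - 2*μ := by
    intro y v hv
    have half : ∀ θ : ℝ, 0 < θ → θ < 1 →
        (1-θ)/2*(‖zb - y‖^2 + ‖wb - v‖^2) ≤ ‖y + v‖^2/2 - μ := by
      intro θ hθ0 hθ1
      have hc := hcombo θ hθ0.le hθ1.le _ _ _ _ _ _ hPlim (hPmem y v hv)
      have hmu : μ ≤ (1-θ)*μ + θ*(‖y + v‖^2/2)
          - θ*(1-θ)/2*(‖zb - y‖^2 + ‖wb - v‖^2) := csInf_le hTbdd ⟨_, _, hc⟩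
      exact minty_theta_step θ μ _ _ hθ0 hmu
    have hfin := minty_half_to_full _ _ half
    have e1 : ‖zb - y‖^2 = ‖y - zb‖^2 := by rw [norm_sub_rev]
    have e2 : ‖wb - v‖^2 = ‖v - wb‖^2 := by rw [norm_sub_rev]
    rw [e1, e2] at hfin
    linarith
  -- membership of (-wb, -zb)
  have hmem : -zb ∈ A (-wb) := by
    refine hmax (-wb) (-zb) (fun y v hv => ?_)
    have hk := hkey y v hv
    have e1 : ‖y - zb‖^2 = ‖y‖^2 - 2*⟪y, zb⟫ + ‖zb‖^2 := norm_sub_sq_real y zb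
    have e2 : ‖v - wb‖^2 = ‖v‖^2 - 2*⟪v, wb⟫ + ‖wb‖^2 := norm_sub_sq_real v wb
    have e3 : ‖y + v‖^2 = ‖y‖^2 + 2*⟪y, v⟫ + ‖v‖^2 := norm_add_sq_real y v
    have e4 : ‖zb + wb‖^2 = ‖zb‖^2 + 2*⟪zb, wb⟫ + ‖wb‖^2 := norm_add_sq_real zb wb
    have e5 : ⟪(-wb) - y, (-zb) - v⟫ = ⟪y, v⟫ + ⟪y, zb⟫ + ⟪v, wb⟫ + ⟪zb, wb⟫ := by
      simp only [inner_sub_left, inner_sub_right, inner_neg_left, inner_neg_right,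
        real_inner_comm]
      ring
    have hq : (0:ℝ) ≤ ‖zb + wb‖^2 := by positivity
    rw [e5]
    linarith [e1, e2, e3, e4]
  -- conclude wb = -zb and μ = 0
  have happ := hkey (-wb) (-zb) hmem
  have f1 : ‖-wb - zb‖^2 = ‖zb + wb‖^2 := by
    rw [show -wb - zb = -(zb + wb) by abel, norm_neg]
  have f2 : ‖-zb - wb‖^2 = ‖zb + wb‖^2 := by
    rw [show -zb - wb = -(zb + wb) by abel, norm_neg]
  have f3 : ‖-wb + -zb‖^2 = ‖zb + wb‖^2 := by
    rw [show -wb + -zb = -(zb + wb) by abel, norm_neg]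
  rw [f1, f2, f3] at happ
  have hnz : ‖zb + wb‖^2 ≤ 0 := by linarith
  have hμz : μ = 0 := by nlinarith [sq_nonneg ‖zb + wb‖]
  have hwz : wb = -zb := by
    have : ‖zb + wb‖ = 0 := by nlinarith [norm_nonneg (zb + wb)]
    have hz : zb + wb = 0 := norm_eq_zero.mp this
    linear_combination (norm := abel) hz
  -- final membership
  refine ⟨zb, hmax zb (-zb) (fun y v hv => ?_)⟩
  have := hPlim y v hv
  rw [hwz, hμz] at this
  simp only [add_neg_cancel, norm_zero] at this
  calc (0:ℝ) = 0^2/2 - 0 := by norm_num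
    _ ≤ ⟪zb - y, -zb - v⟫ := this

private lemma minty_surj (A : H → Set H)
    (hmono : ∀ x y u v, u ∈ A x → v ∈ A y → 0 ≤ ⟪x - y, u - v⟫)
    (hmax : ∀ x u, (∀ y v, v ∈ A y → 0 ≤ ⟪x - y, u - v⟫) → u ∈ A x) (x : H) :
    ∃ z, x - z ∈ A z := by
  set B : H → Set H := fun y => {u | u + x ∈ A y} with hB
  have hBmono : ∀ x' y u v, u ∈ B x' → v ∈ B y → 0 ≤ ⟪x' - y, u - v⟫ := by
    intro x' y u v hu hv
    have := hmono x' y (u + x) (v + x) hu hv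
    simpa [add_sub_add_right_eq_sub] using this
  have hBmax : ∀ x' u, (∀ y v, v ∈ B y → 0 ≤ ⟪x' - y, u - v⟫) → u ∈ B x' := by
    intro x' u h
    refine hmax x' (u + x) (fun y v hv => ?_)
    have hv' : v - x ∈ B y := by
      simp only [hB, Set.mem_setOf_eq, sub_add_cancel]
      exact hv
    have := h y (v - x) hv'
    have e : u + x - v = u - (v - x) := by abel
    rw [e]
    exact this
  obtain ⟨z, hz⟩ := minty_zero B hBmono hBmax
  exact ⟨z, by rw [show x - z = -z + x by abel]; exact hz⟩

end MintyAux

theorem stmt9 {H : Type*} [NormedAddCommGroup H] [InnerProductSpace ℝ H]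
    [CompleteSpace H] (A : H → Set H)
    (hmono : ∀ x y u v, u ∈ A x → v ∈ A y → 0 ≤ ⟪x - y, u - v⟫)
    (hmax : ∀ x u, (∀ y v, v ∈ A y → 0 ≤ ⟪x - y, u - v⟫) → u ∈ A x) :
    ∃ J : H → H,
      (∀ x, x - J x ∈ A (J x)) ∧
      (∀ x z, x - z ∈ A z → z = J x) ∧
      (∀ x y, ‖J x - J y‖ ^ 2 ≤ ⟪x - y, J x - J y⟫) := by
  have hsurj := minty_surj A hmono hmax
  refine ⟨fun x => (hsurj x).choose, fun x => (hsurj x).choose_spec, ?_, ?_⟩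
  · intro x z hz
    set j := (hsurj x).choose with hj
    have hjx : x - j ∈ A j := (hsurj x).choose_spec
    have h0 := hmono z j (x - z) (x - j) hz hjx
    have e : x - z - (x - j) = -(z - j) := by abel
    rw [e, inner_neg_right] at h0
    have h1 : ⟪z - j, z - j⟫ ≤ 0 := by linarith
    have h2 : z - j = 0 := inner_self_eq_zero.mp (le_antisymm h1 real_inner_self_nonneg)
    exact sub_eq_zero.mp h2
  · intro x y
    set jx := (hsurj x).choose
    set jy := (hsurj y).choose
    have h0 := hmono jx jy (x - jx) (y - jy) (hsurj x).choose_spec (hsurj y).choose_spec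
    have e : x - jx - (y - jy) = (x - y) - (jx - jy) := by abel
    rw [e, inner_sub_right] at h0
    have e2 : ⟪jx - jy, jx - jy⟫ = ‖jx - jy‖^2 := real_inner_self_eq_norm_sq _
    have e3 : ⟪jx - jy, x - y⟫ = ⟪x - y, jx - jy⟫ := real_inner_comm _ _
    linarith
end

section
/- Let Θ be symmetric positive definite and U maximally monotone with 0 ∈ U(ω*). If ω_{t+1} satisfies Θ(ω̃_t − ω_{t+1}) ∈ U(ω_{t+1}) with ω̃_t = ω_t + η(ω_t − ω_{t−1}), then ‖ω_{t+1}−ω*‖_Θ² − ‖ω_t−ω*‖_Θ² ≤ 2η⟨ω_t−ω_{t−1}, ω_{t+1}−ω*⟩_Θ − ‖ω_t−ω_{t+1}‖_Θ². -/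
open Matrix

theorem stmt11 {m : ℕ} (Θ : Matrix (Fin m) (Fin m) ℝ) (hΘ : Θ.PosDef)
    (U : (Fin m → ℝ) → Set (Fin m → ℝ))
    (hmono : ∀ x y u v, u ∈ U x → v ∈ U y → 0 ≤ (x - y) ⬝ᵥ (u - v))
    (hmax : ∀ x u, (∀ y v, v ∈ U y → 0 ≤ (x - y) ⬝ᵥ (u - v)) → u ∈ U x)
    (η : ℝ) (hη : 0 ≤ η)
    (ωstar ωprev ωt ωnext ωtilde : Fin m → ℝ)
    (hstar : 0 ∈ U ωstar)
    (htilde : ωtilde = ωt + η • (ωt - ωprev))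
    (hstep : Θ *ᵥ (ωtilde - ωnext) ∈ U ωnext) :
    (ωnext - ωstar) ⬝ᵥ Θ *ᵥ (ωnext - ωstar) - (ωt - ωstar) ⬝ᵥ Θ *ᵥ (ωt - ωstar)
      ≤ 2 * η * ((ωt - ωprev) ⬝ᵥ Θ *ᵥ (ωnext - ωstar))
        - (ωt - ωnext) ⬝ᵥ Θ *ᵥ (ωt - ωnext) := by
  have hsym : ∀ x y : Fin m → ℝ, x ⬝ᵥ Θ *ᵥ y = y ⬝ᵥ Θ *ᵥ x := by
    intro x y
    rw [Matrix.dotProduct_mulVec, ← Matrix.mulVec_transpose,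
      show Θᵀ = Θ from hΘ.1, dotProduct_comm]
  have key := hmono ωnext ωstar (Θ *ᵥ (ωtilde - ωnext)) 0 hstep hstar
  rw [sub_zero] at key
  subst htilde
  have expand : ∀ a b c d : Fin m → ℝ,
      (a - b) ⬝ᵥ Θ *ᵥ (c - d) = a ⬝ᵥ Θ *ᵥ c - a ⬝ᵥ Θ *ᵥ d - b ⬝ᵥ Θ *ᵥ c + b ⬝ᵥ Θ *ᵥ d := by
    intro a b c d
    simp [Matrix.mulVec_sub, sub_dotProduct, dotProduct_sub]
    ring
  have hkey2 : (0:ℝ) ≤ (ωnext - ωstar) ⬝ᵥ Θ *ᵥ (ωt - ωnext)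
      + η * ((ωnext - ωstar) ⬝ᵥ Θ *ᵥ (ωt - ωprev)) := by
    have : ωt + η • (ωt - ωprev) - ωnext = (ωt - ωnext) + η • (ωt - ωprev) := by
      abel
    rw [this, Matrix.mulVec_add, Matrix.mulVec_smul, dotProduct_add,
      dotProduct_smul, smul_eq_mul] at key
    linarith
  have h1 := hsym (ωnext - ωstar) (ωt - ωprev)
  simp only [expand] at hkey2 h1 ⊢
  nlinarith [hsym ωnext ωt, hsym ωnext ωstar, hsym ωt ωstar, hsym ωnext ωprev,
    hsym ωt ωprev, hsym ωstar ωprev]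
end
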